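/- Let X : ℝ × ℝ → ℝ³ be the helicoid patch X(u,v) = (-sinh u · sin v, sinh u · cos v, v), let N(u,v) = (X_u × X_v)/‖X_u × X_v‖ be its unit normal (the cross product being nonzero for all (u,v)), and let K(u,v) = -1/cosh⁴u be its Gauss curvature. Then for all (u,v), the quantity (-K(u,v))^{-1/2}·(1 - ⟨N(u,v), (0,0,1)⟩²) equals 1; that is, the second Chern–Ricci function of the helicoid with respect to V = e₃ is identically 0. -/

import Mathlib

/-- The helicoid patch `X(u,v) = (-sinh u · sin v, sinh u · cos v, v)`. -/
noncomputable def helicoidPatch (u v : ℝ) : EuclideanSpace ℝ (Fin 3) :=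
  !₂[-Real.sinh u * Real.sin v, Real.sinh u * Real.cos v, v]

/-- The cross product of two vectors in `ℝ³`. -/
noncomputable def cross3 (a b : EuclideanSpace ℝ (Fin 3)) : EuclideanSpace ℝ (Fin 3) :=
  !₂[a 1 * b 2 - a 2 * b 1, a 2 * b 0 - a 0 * b 2, a 0 * b 1 - a 1 * b 0]

/-- The unit normal of the helicoid patch, `N = (X_u × X_v)/‖X_u × X_v‖`. -/
noncomputable def helicoidNormal (u v : ℝ) : EuclideanSpace ℝ (Fin 3) :=
  ‖cross3 (deriv (fun u' => helicoidPatch u' v) u) (deriv (fun v' => helicoidPatch u v') v)‖⁻¹ •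
    cross3 (deriv (fun u' => helicoidPatch u' v) u) (deriv (fun v' => helicoidPatch u v') v)

/-!
The coordinate derivatives of the helicoid give `X_u × X_v = cosh u • (cos v, sin v, sinh u)`,
a vector of length `cosh² u`. Hence the angle function is `N_{e₃} = tanh u`, so
`1 - N_{e₃}² = cosh⁻² u`, which is exactly `(-K)^{1/2}`.
-/

open Real

theorem HasDerivAt.euclideanSpace_vec3 {f g h : ℝ → ℝ} {f' g' h' x : ℝ}
    (hf : HasDerivAt f f' x) (hg : HasDerivAt g g' x) (hh : HasDerivAt h h' x) :
    HasDerivAt (fun t => !₂[f t, g t, h t]) (!₂[f', g', h'] : EuclideanSpace ℝ (Fin 3)) x := by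
  have hpi : HasDerivAt (fun t => ![f t, g t, h t]) ![f', g', h'] x := by
    rw [hasDerivAt_pi]
    intro i
    fin_cases i <;> assumption
  exact (EuclideanSpace.equiv (Fin 3) ℝ).symm.toContinuousLinearMap.hasFDerivAt.comp_hasDerivAt x hpi

theorem one_sub_tanh_sq (x : ℝ) : 1 - tanh x ^ 2 = (cosh x ^ 2)⁻¹ := by
  have hx : cosh x ≠ 0 := (cosh_pos x).ne'
  rw [tanh_eq_sinh_div_cosh]
  field_simp
  linear_combination cosh_sq_sub_sinh_sq x

theorem inv_pow_four_rpow_neg_half (x : ℝ) : (x ^ 4)⁻¹ ^ (-(1 / 2) : ℝ) = x ^ 2 := by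
  rw [rpow_neg (by positivity), inv_rpow (by positivity), inv_inv, ← sqrt_eq_rpow,
    show x ^ 4 = (x ^ 2) ^ 2 by ring, sqrt_sq (by positivity)]

theorem norm_cos_sin_sinh (u v : ℝ) : ‖!₂[cos v, sin v, sinh u]‖ = cosh u := by
  rw [EuclideanSpace.norm_eq, Fin.sum_univ_three]
  simp only [Real.norm_eq_abs, sq_abs, Matrix.cons_val_zero, Matrix.cons_val_one,
    Matrix.cons_val_two, Matrix.head_cons, Matrix.tail_cons]
  rw [cos_sq_add_sin_sq, ← cosh_sq', sqrt_sq (cosh_pos u).le]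

theorem hasDerivAt_helicoidPatch_fst (u v : ℝ) :
    HasDerivAt (fun u' => helicoidPatch u' v) !₂[-cosh u * sin v, cosh u * cos v, 0] u :=
  ((hasDerivAt_sinh u).neg.mul_const (sin v)).euclideanSpace_vec3
    ((hasDerivAt_sinh u).mul_const (cos v)) (hasDerivAt_const u v)

theorem hasDerivAt_helicoidPatch_snd (u v : ℝ) :
    HasDerivAt (fun v' => helicoidPatch u v') !₂[-sinh u * cos v, sinh u * -sin v, 1] v :=
  ((hasDerivAt_sin v).const_mul (-sinh u)).euclideanSpace_vec3
    ((hasDerivAt_cos v).const_mul (sinh u)) (hasDerivAt_id v)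

theorem cross3_deriv_helicoidPatch (u v : ℝ) :
    cross3 (deriv (fun u' => helicoidPatch u' v) u) (deriv (fun v' => helicoidPatch u v') v)
      = cosh u • !₂[cos v, sin v, sinh u] := by
  rw [(hasDerivAt_helicoidPatch_fst u v).deriv, (hasDerivAt_helicoidPatch_snd u v).deriv]
  ext i
  fin_cases i
  · simp [cross3]
  · simp [cross3]
  · simp only [cross3, Fin.isValue, neg_mul, Matrix.cons_val_one, Matrix.cons_val_zero, mul_neg,
      Matrix.cons_val, mul_one, zero_mul, neg_zero, sub_zero, sub_neg_eq_add, zero_add, neg_neg,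
      Fin.reduceFinMk, PiLp.smul_apply, smul_eq_mul]
    linear_combination sinh u * cosh u * sin_sq_add_cos_sq v

theorem norm_cross3_deriv_helicoidPatch (u v : ℝ) :
    ‖cross3 (deriv (fun u' => helicoidPatch u' v) u)
      (deriv (fun v' => helicoidPatch u v') v)‖ = cosh u ^ 2 := by
  rw [cross3_deriv_helicoidPatch, norm_smul, norm_cos_sin_sinh, norm_of_nonneg (cosh_pos u).le, sq]

theorem inner_helicoidNormal_e3 (u v : ℝ) :
    inner ℝ (helicoidNormal u v) (!₂[0, 0, 1] : EuclideanSpace ℝ (Fin 3)) = tanh u := by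
  have hu : cosh u ≠ 0 := (cosh_pos u).ne'
  rw [helicoidNormal, real_inner_smul_left, norm_cross3_deriv_helicoidPatch,
    cross3_deriv_helicoidPatch, real_inner_smul_left]
  simp only [PiLp.inner_apply, RCLike.inner_apply, ringHom_apply, Fin.sum_univ_three, Fin.isValue,
    Matrix.cons_val_zero, zero_mul, Matrix.cons_val_one, add_zero, Matrix.cons_val, one_mul, zero_add,
    tanh_eq_sinh_div_cosh]
  field_simp

/-- For the helicoid, the cross product `X_u × X_v` is everywhere nonzero and,
with Gauss curvature `K = -1/cosh⁴u` and unit normal `N`, the quantity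
`(-K)^(-1/2)·(1 - ⟨N, e₃⟩²)` is identically `1`; i.e. the second Chern–Ricci function of the
helicoid with respect to `V = e₃` is identically `0`. -/
theorem helicoid_second_chern_ricci_constant
    (K : ℝ → ℝ → ℝ) (hK : ∀ u v : ℝ, K u v = -1 / Real.cosh u ^ 4) :
    ∀ u v : ℝ,
      cross3 (deriv (fun u' => helicoidPatch u' v) u)
          (deriv (fun v' => helicoidPatch u v') v) ≠ 0 ∧
      (-K u v) ^ (-(1 / 2) : ℝ) *
        (1 - (inner ℝ (helicoidNormal u v) (!₂[0, 0, 1] : EuclideanSpace ℝ (Fin 3)) : ℝ) ^ 2)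
      = 1 := by
  intro u v
  have hcosh_sq : cosh u ^ 2 ≠ 0 := (pow_pos (cosh_pos u) 2).ne'
  constructor
  · rwa [← norm_ne_zero_iff, norm_cross3_deriv_helicoidPatch]
  · rw [hK, neg_div, neg_neg, one_div, inv_pow_four_rpow_neg_half, inner_helicoidNormal_e3,
      one_sub_tanh_sq]
    exact mul_inv_cancel₀ hcosh_sq
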